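/- arXiv:1809.00584 — 6 statements merged into one kernel-verified Lean document; each statement's English description precedes it below -/
import Mathlib

section
/- Every moment sequence has a finitely atomic representing measure: if A = {a_1,...,a_m} are measurable real-valued functions on a measurable space (X, 𝔄) and μ is a positive measure on (X, 𝔄) such that each a_i is μ-integrable, then there exist k ≤ m points x_1,...,x_k ∈ X and positive reals c_1,...,c_k such that ∫ a_i dμ = Σ_{j=1}^k c_j · a_i(x_j) for all i = 1,...,m. -/
/-!
The moment vector `∫ φ dμ` of `φ = (a₁, …, aₘ)` lies in the convex cone generated by the values
of `φ`: otherwise a nonzero functional `f` separates it from that cone, so `f ∘ φ ≤ 0` has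
nonnegative integral and therefore vanishes a.e.; then `φ` lives a.e. in `ker f`, and induction
on the dimension applies. Carathéodory's theorem for cones then writes the moment vector as a
positive combination of at most `m` linearly independent values `φ xⱼ`.
-/

open MeasureTheory Module Finset

namespace PointedCone

section

variable {E : Type*} [AddCommGroup E] [Module ℝ E]

lemma map_nonpos_of_forall_le {C : PointedCone ℝ E} (f : E →ₗ[ℝ] ℝ) {b : ℝ}
    (hb : ∀ c ∈ C, f c ≤ b) {c : E} (hc : c ∈ C) : f c ≤ 0 := by
  by_contra! hpos
  have hscaled := hb _ (C.smul_mem (r := (|b| + 1) / f c) (by positivity) hc)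
  rw [map_smul, smul_eq_mul, div_mul_cancel₀ _ hpos.ne'] at hscaled
  linarith [le_abs_self b]

lemma map_hull {F : Type*} [AddCommGroup F] [Module ℝ F] (f : E →ₗ[ℝ] F) (s : Set E) :
    (hull ℝ s).map f = hull ℝ (f '' s) :=
  Submodule.map_span _ _

lemma exists_zero_coeff_of_sum_smul_eq_zero {t : Finset E} {c g : E → ℝ}
    (hc : ∀ y ∈ t, 0 ≤ c y) (hg : ∑ y ∈ t, g y • y = 0) (hpos : ∃ y ∈ t, 0 < g y) :
    ∃ c' : E → ℝ, (∀ y ∈ t, 0 ≤ c' y) ∧ (∃ y ∈ t, c' y = 0) ∧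
      ∑ y ∈ t, c' y • y = ∑ y ∈ t, c y • y := by
  -- move along the relation until the first coefficient reaches zero
  obtain ⟨y₀, hy₀, hmin⟩ := {y ∈ t | 0 < g y}.exists_min_image (fun y => c y / g y)
    (by simpa [Finset.Nonempty] using hpos)
  rw [mem_filter] at hy₀
  set r := c y₀ / g y₀
  have hr : 0 ≤ r := div_nonneg (hc y₀ hy₀.1) hy₀.2.le
  refine ⟨fun y => c y - r * g y, fun y hy => ?_, ⟨y₀, hy₀.1, ?_⟩, ?_⟩
  · rcases lt_or_ge 0 (g y) with hgy | hgy
    · have := hmin y (mem_filter.2 ⟨hy, hgy⟩)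
      rw [le_div_iff₀ hgy] at this
      linarith
    · nlinarith [hc y hy]
  · simp [r, div_mul_cancel₀ _ hy₀.2.ne']
  · simp only [sub_smul, sum_sub_distrib, mul_smul, ← smul_sum, hg, smul_zero, sub_zero]

lemma exists_linearIndepOn_subset_sum_eq (t : Finset E) (c : E → ℝ) (hc : ∀ y ∈ t, 0 ≤ c y) :
    ∃ u ⊆ t, LinearIndepOn ℝ id (u : Set E) ∧ ∃ d : E → ℝ, (∀ y ∈ u, 0 < d y) ∧
      ∑ y ∈ u, d y • y = ∑ y ∈ t, c y • y := by
  classical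
  induction t using Finset.strongInduction generalizing c with
  | H t ih =>
  by_cases hli : LinearIndepOn ℝ id (t : Set E)
  · refine ⟨{y ∈ t | c y ≠ 0}, filter_subset _ _, hli.mono (coe_subset.2 (filter_subset _ _)), c,
      fun y hy => ?_, ?_⟩
    · rw [mem_filter] at hy
      exact (hc y hy.1).lt_of_ne hy.2.symm
    · exact sum_filter_of_ne fun y _ hy h => hy (by simp [h])
  obtain ⟨g, hg, y, hy, hgy⟩ := not_linearIndepOn_finset_iff.1 hli
  simp only [id] at hg
  have hrel : ∃ g : E → ℝ, ∑ y ∈ t, g y • y = 0 ∧ ∃ y ∈ t, 0 < g y := by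
    rcases hgy.lt_or_gt with hneg | hpos
    · exact ⟨-g, by simp [neg_smul, sum_neg_distrib, hg], y, hy, by simpa using hneg⟩
    · exact ⟨g, hg, y, hy, hpos⟩
  obtain ⟨g, hg, hpos⟩ := hrel
  obtain ⟨c', hc', ⟨y₀, hy₀, hzero⟩, hsum⟩ := exists_zero_coeff_of_sum_smul_eq_zero hc hg hpos
  obtain ⟨u, hu, hli, d, hd, hdsum⟩ :=
    ih (t.erase y₀) (erase_ssubset hy₀) c' fun y hy => hc' y (mem_of_mem_erase hy)
  refine ⟨u, hu.trans (erase_subset _ _), hli, d, hd, ?_⟩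
  rw [hdsum, sum_erase _ (by simp [hzero]), hsum]

theorem exists_fin_sum_eq_of_mem_hull [FiniteDimensional ℝ E] {s : Set E} {v : E}
    (hv : v ∈ hull ℝ s) :
    ∃ (k : ℕ) (_ : k ≤ finrank ℝ E) (y : Fin k → E) (c : Fin k → ℝ),
      (∀ j, y j ∈ s) ∧ (∀ j, 0 < c j) ∧ ∑ j, c j • y j = v := by
  obtain ⟨c, hcs, hc, rfl⟩ := mem_hull_set.1 hv
  obtain ⟨u, hu, hli, d, hd, hsum⟩ := exists_linearIndepOn_subset_sum_eq c.support c fun y _ => hc y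
  let e := u.equivFin.symm
  refine ⟨u.card, hli.finset_card_le_finrank, fun j => e j, fun j => d (e j),
    fun j => hcs (hu (e j).2), fun j => hd _ (e j).2, ?_⟩
  rw [Equiv.sum_comp e (fun y => d y • (y : E)), sum_coe_sort u (fun y => d y • y), hsum]
  rfl

end

section

variable {E : Type*} [NormedAddCommGroup E] [NormedSpace ℝ E] [FiniteDimensional ℝ E]

theorem exists_dual_nonpos_of_notMem (C : PointedCone ℝ E) {v : E} (hv : v ∉ C) :
    ∃ f : StrongDual ℝ E, f ≠ 0 ∧ (∀ c ∈ C, f c ≤ 0) ∧ 0 ≤ f v := by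
  by_cases hspan : Submodule.span ℝ (C : Set E) = ⊤
  · have hint : (interior (C : Set E)).Nonempty := by
      rw [C.convex.interior_nonempty_iff_affineSpan_eq_top,
        AffineSubspace.affineSpan_eq_top_iff_vectorSpan_eq_top_of_nonempty _ _ _ ⟨0, C.zero_mem⟩,
        vectorSpan_eq_span_vsub_set_right ℝ C.zero_mem]
      simpa using hspan
    obtain ⟨f, hf0, hf⟩ := geometric_hahn_banach_of_nonempty_interior_point C.convex
      (fun h => hv (interior_subset h)) hint
    exact ⟨f, hf0, fun c hc => map_nonpos_of_forall_le (f : E →ₗ[ℝ] ℝ) hf hc,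
      by simpa using hf 0 C.zero_mem⟩
  · obtain ⟨f, hf0, hf⟩ := Submodule.exists_dual_map_eq_bot_of_lt_top
      (lt_top_iff_ne_top.2 hspan) inferInstance
    have hfC : ∀ c ∈ C, f c = 0 := fun c hc => by
      simpa [hf] using Submodule.mem_map_of_mem (f := f) (Submodule.subset_span hc)
    rcases le_total 0 (f v) with hfv | hfv
    · exact ⟨LinearMap.toContinuousLinearMap f, by simpa using hf0,
        fun c hc => (hfC c hc).le, hfv⟩
    · exact ⟨-LinearMap.toContinuousLinearMap f, by simpa using hf0,
        fun c hc => by simp [hfC c hc], by simpa using hfv⟩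

end

end PointedCone

theorem ae_eq_zero_of_nonpos_of_integral_nonneg {X : Type*} [MeasurableSpace X] {μ : Measure X}
    {g : X → ℝ} (hg : Integrable g μ) (hle : ∀ᵐ x ∂μ, g x ≤ 0) (hint : 0 ≤ ∫ x, g x ∂μ) :
    ∀ᵐ x ∂μ, g x = 0 := by
  have hzero : ∫ x, -g x ∂μ = 0 := by
    rw [integral_neg]
    linarith [integral_nonpos_of_ae hle]
  filter_upwards [(integral_eq_zero_iff_of_nonneg_ae (hle.mono fun x hx => neg_nonneg.2 hx)
    hg.neg).1 hzero] with x hx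
  simpa using hx

/-- The set `s` lets the induction discard the null set where `φ` leaves the kernel of the
separating functional. -/
theorem integral_mem_hull_image {X : Type*} [MeasurableSpace X] {μ : Measure X}
    {E : Type*} [NormedAddCommGroup E] [NormedSpace ℝ E] [FiniteDimensional ℝ E]
    {φ : X → E} (hφ : Integrable φ μ) {s : Set X} (hs : ∀ᵐ x ∂μ, x ∈ s) :
    ∫ x, φ x ∂μ ∈ PointedCone.hull ℝ (φ '' s) := by
  induction hn : finrank ℝ E using Nat.strong_induction_on generalizing E s with
  | _ n ih =>
  by_contra hv
  obtain ⟨f, hf0, hfC, hfv⟩ := (PointedCone.hull ℝ (φ '' s)).exists_dual_nonpos_of_notMem hv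
  have hfφ : ∀ᵐ x ∂μ, f (φ x) = 0 := by
    refine ae_eq_zero_of_nonpos_of_integral_nonneg (f.integrable_comp hφ) ?_ ?_
    · filter_upwards [hs] with x hx
      exact hfC _ (PointedCone.subset_hull (Set.mem_image_of_mem φ hx))
    · rwa [f.integral_comp_comm hφ]
  obtain ⟨P, hP⟩ := f.ker_closedComplemented_of_finiteDimensional_range
  have hPφ : ∀ x, f (φ x) = 0 → (P (φ x) : E) = φ x := fun x hx =>
    congrArg Subtype.val (hP ⟨φ x, hx⟩)
  have hrank : finrank ℝ f.ker < n := hn ▸ Submodule.finrank_lt fun h =>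
    hf0 (ContinuousLinearMap.coe_injective (by simpa using LinearMap.ker_eq_top.1 h))
  have hint : f.ker.subtype (∫ x, P (φ x) ∂μ) = ∫ x, φ x ∂μ := by
    rw [Submodule.subtype_apply, ← f.ker.subtypeL_apply,
      ← (f.ker.subtypeL).integral_comp_comm (P.integrable_comp hφ)]
    refine integral_congr_ae ?_
    filter_upwards [hfφ] with x hx
    exact hPφ x hx
  have hmem : ∫ x, φ x ∂μ ∈ (PointedCone.hull ℝ _).map f.ker.subtype := PointedCone.mem_map.2
    ⟨_, ih _ hrank (P.integrable_comp hφ) (s := {x | x ∈ s ∧ f (φ x) = 0}) (hs.and hfφ) rfl, hint⟩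
  rw [PointedCone.map_hull] at hmem
  refine hv (Submodule.span_mono ?_ hmem)
  rintro _ ⟨_, ⟨x, ⟨hxs, hx⟩, rfl⟩, rfl⟩
  exact ⟨x, hxs, (hPφ x hx).symm⟩

theorem richter_general {X : Type*} [MeasurableSpace X] {m : ℕ} (a : Fin m → X → ℝ)
    (μ : Measure X) (hint : ∀ i, Integrable (a i) μ) :
    ∃ (k : ℕ) (_ : k ≤ m) (x : Fin k → X) (c : Fin k → ℝ),
      (∀ j, 0 < c j) ∧ ∀ i, ∫ y, a i y ∂μ = ∑ j, c j * a i (x j) := by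
  let φ : X → Fin m → ℝ := fun y i => a i y
  have hmem : ∫ y, φ y ∂μ ∈ PointedCone.hull ℝ (Set.range φ) := by
    simpa using integral_mem_hull_image (Integrable.of_eval hint) (s := Set.univ) (by simp)
  obtain ⟨k, hk, v, c, hv, hc, hsum⟩ := PointedCone.exists_fin_sum_eq_of_mem_hull hmem
  choose x hx using hv
  refine ⟨k, by simpa using hk, x, c, hc, fun i => ?_⟩
  rw [← eval_integral hint i, ← hsum]
  simp [← hx, φ]

/-- **Richter's Theorem.** Every moment sequence has a `k`-atomic representing
measure with `k ≤ m`: if `a 1, …, a m` are measurable real-valued functions on a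
measurable space `X` and `μ` is a positive measure making every `a i` integrable,
then there are `k ≤ m` points `x j` and positive weights `c j` with
`∫ a i dμ = ∑ j, c j * a i (x j)` for all `i`. -/
theorem richter {X : Type*} [MeasurableSpace X] {m : ℕ} (a : Fin m → X → ℝ)
    (ha : ∀ i, Measurable (a i)) (μ : Measure X) (hint : ∀ i, Integrable (a i) μ) :
    ∃ (k : ℕ) (_ : k ≤ m) (x : Fin k → X) (c : Fin k → ℝ),
      (∀ j, 0 < c j) ∧ ∀ i, ∫ y, a i y ∂μ = ∑ j, c j * a i (x j) :=
  richter_general a μ hint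
end

section
/- The moment cone S_A is a convex cone in ℝ^m, and it equals the convex conic hull of the image of the moment curve: S_A = conv cone s_A(X). -/
/-!
Richter's theorem. If `∫ f ∂μ` were outside the cone generated by the values of `f`, a
supporting functional `ℓ` of that cone would be `≤ 0` on every value of `f` yet have
nonnegative integral `ℓ (∫ f ∂μ)`; hence `ℓ ∘ f = 0` almost everywhere, and after projecting
onto the hyperplane `ker ℓ` the claim follows by induction on the dimension. Conversely, a conic
combination of values of `f` is the integral of `f` against a finite sum of Dirac masses.
-/

open MeasureTheory Set

theorem PointedCone.mem_hull_range_iff {R E ι : Type*} [Semiring R] [PartialOrder R]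
    [IsOrderedRing R] [AddCommMonoid E] [Module R E] {f : ι → E} {v : E} :
    v ∈ PointedCone.hull R (range f) ↔
      ∃ (k : ℕ) (x : Fin k → ι) (c : Fin k → R),
        (∀ j, 0 ≤ c j) ∧ v = ∑ j, c j • f (x j) := by
  constructor
  · intro hv
    obtain ⟨k, c, g, rfl⟩ := Submodule.mem_span_set'.1 hv
    choose x hx using fun j => (g j).2
    exact ⟨k, x, fun j => c j, fun j => (c j).2, by simp [hx]⟩
  · rintro ⟨k, x, c, hc, rfl⟩
    exact Submodule.sum_mem _ fun j _ =>
      PointedCone.smul_mem _ (hc j) (subset_hull (mem_range_self _))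

theorem PointedCone.apply_mem_hull_image {R E F : Type*} [Semiring R] [PartialOrder R]
    [IsOrderedRing R] [AddCommMonoid E] [Module R E] [AddCommMonoid F] [Module R F]
    (L : E →ₗ[R] F) {s : Set E} {v : E} (hv : v ∈ PointedCone.hull R s) :
    L v ∈ PointedCone.hull R (L '' s) := by
  have := Submodule.mem_map_of_mem (f := L.restrictScalars {c : R // 0 ≤ c}) hv
  rwa [Submodule.map_span] at this

theorem PointedCone.exists_dual_nonpos_of_notMem_s2 {E : Type*} [NormedAddCommGroup E]
    [NormedSpace ℝ E] [FiniteDimensional ℝ E] {C : PointedCone ℝ E} {b : E} (hb : b ∉ C) :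
    ∃ ℓ : StrongDual ℝ E, ℓ ≠ 0 ∧ (∀ y ∈ C, ℓ y ≤ 0) ∧ 0 ≤ ℓ b := by
  by_cases hint : (interior (C : Set E)).Nonempty
  · obtain ⟨ℓ, hℓ, hle⟩ := geometric_hahn_banach_of_nonempty_interior_point C.convex
      (fun h => hb (interior_subset h)) hint
    have hb0 : 0 ≤ ℓ b := by simpa using hle 0 C.zero_mem
    refine ⟨ℓ, hℓ, fun y hy => ?_, hb0⟩
    by_contra! hpos
    have := hle ((ℓ b / ℓ y + 1) • y) (C.smul_mem (by positivity) hy)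
    rw [map_smul, smul_eq_mul, add_mul, div_mul_cancel₀ _ hpos.ne'] at this
    linarith
  · have hspan : vectorSpan ℝ (C : Set E) < ⊤ := by
      rw [lt_top_iff_ne_top, Ne,
        ← AffineSubspace.affineSpan_eq_top_iff_vectorSpan_eq_top_of_nonempty ℝ _ _ ⟨0, C.zero_mem⟩,
        ← C.convex.interior_nonempty_iff_affineSpan_eq_top]
      exact hint
    obtain ⟨ℓ, hℓ, hker⟩ := (vectorSpan ℝ (C : Set E)).exists_le_ker_of_lt_top hspan
    have hC : ∀ y ∈ C, ℓ y = 0 := fun y hy =>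
      hker (by simpa using vsub_mem_vectorSpan ℝ (SetLike.mem_coe.2 hy) C.zero_mem)
    rcases le_total 0 (ℓ b) with hb0 | hb0
    · exact ⟨ℓ.toContinuousLinearMap, by simpa using hℓ, fun y hy => (hC y hy).le, hb0⟩
    · exact ⟨-ℓ.toContinuousLinearMap, by simpa using hℓ, fun y hy => by simp [hC y hy],
        by simpa using hb0⟩

section MomentCone

variable {X E : Type*} [MeasurableSpace X] [NormedAddCommGroup E] [NormedSpace ℝ E]

theorem ae_eq_zero_of_ae_nonpos_of_integral_nonneg {μ : Measure X} {g : X → ℝ}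
    (hg : Integrable g μ) (hle : ∀ᵐ x ∂μ, g x ≤ 0) (h : 0 ≤ ∫ x, g x ∂μ) : g =ᵐ[μ] 0 := by
  have hneg : -g =ᵐ[μ] 0 := (integral_eq_zero_iff_of_nonneg_ae
    (hle.mono fun _ hx => neg_nonneg.2 hx) hg.neg).1 (by
      rw [integral_neg, le_antisymm (integral_nonpos_of_ae hle) h, neg_zero])
  exact hneg.mono fun _ hx => neg_eq_zero.1 hx

/-- The set `S` carrying `μ` lets the induction discard the null set where `ℓ ∘ f ≠ 0`. -/
theorem integral_mem_hull_image_of_ae_mem [FiniteDimensional ℝ E] {μ : Measure X} {f : X → E}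
    (hf : Integrable f μ) {S : Set X} (hS : ∀ᵐ x ∂μ, x ∈ S) :
    ∫ x, f x ∂μ ∈ PointedCone.hull ℝ (f '' S) := by
  induction hn : Module.finrank ℝ E using Nat.strong_induction_on generalizing E S with
  | _ n ih =>
  by_contra hb
  obtain ⟨ℓ, hℓ, hℓC, hℓb⟩ := PointedCone.exists_dual_nonpos_of_notMem_s2 hb
  have hℓf : ∀ᵐ x ∂μ, ℓ (f x) = 0 := by
    refine ae_eq_zero_of_ae_nonpos_of_integral_nonneg (ℓ.integrable_comp hf)
      (hS.mono fun x hx => hℓC _ (PointedCone.subset_hull (mem_image_of_mem f hx))) ?_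
    rwa [ℓ.integral_comp_comm hf]
  set K := LinearMap.ker (ℓ : E →ₗ[ℝ] ℝ)
  have hK : Module.finrank ℝ K < n := hn ▸ Submodule.finrank_lt (by
    rwa [Ne, LinearMap.ker_eq_top, ← ContinuousLinearMap.toLinearMap_zero,
      ContinuousLinearMap.coe_inj])
  obtain ⟨P, hP⟩ := Submodule.ClosedComplemented.of_finiteDimensional K
  have hPf : ∀ x, ℓ (f x) = 0 → K.subtype (P (f x)) = f x := fun x hx =>
    congrArg Subtype.val (hP ⟨f x, hx⟩)
  have hmem := ih _ hK (P.integrable_comp hf) (S := S ∩ {x | ℓ (f x) = 0}) (hS.and hℓf) rfl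
  have hint : ∫ x, f x ∂μ = K.subtype (∫ x, P (f x) ∂μ) := by
    refine (integral_congr_ae (hℓf.mono fun x hx => (hPf x hx).symm)).trans ?_
    exact K.subtypeL.integral_comp_comm (P.integrable_comp hf)
  have hsub : K.subtype '' ((fun x => P (f x)) '' (S ∩ {x | ℓ (f x) = 0})) ⊆ f '' S := by
    rintro _ ⟨_, ⟨x, hx, rfl⟩, rfl⟩
    exact ⟨x, hx.1, (hPf x hx.2).symm⟩
  exact hb <| hint ▸ Submodule.span_mono hsub (PointedCone.apply_mem_hull_image K.subtype hmem)

def momentCone (f : X → E) : Set E :=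
  {v | ∃ μ : Measure X, Integrable f μ ∧ ∫ x, f x ∂μ = v}

theorem hull_range_subset_momentCone [CompleteSpace E] {f : X → E}
    (hf : StronglyMeasurable f) :
    (PointedCone.hull ℝ (range f) : Set E) ⊆ momentCone f := by
  intro v hv
  induction hv using Submodule.span_induction with
  | mem _ hv =>
    obtain ⟨x, rfl⟩ := hv
    exact ⟨Measure.dirac x, integrable_dirac' hf enorm_lt_top, integral_dirac' f x hf⟩
  | zero => exact ⟨0, integrable_zero_measure, integral_zero_measure f⟩
  | add _ _ _ _ hv hw =>
    obtain ⟨μ, hμ, rfl⟩ := hv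
    obtain ⟨ν, hν, rfl⟩ := hw
    exact ⟨μ + ν, hμ.add_measure hν, integral_add_measure hμ hν⟩
  | smul c _ _ hv =>
    obtain ⟨μ, hμ, rfl⟩ := hv
    refine ⟨(c : ℝ).toNNReal • μ, hμ.smul_measure_nnreal, ?_⟩
    rw [integral_smul_nnreal_measure, NNReal.smul_def, Real.coe_toNNReal _ c.2,
      Nonneg.coe_smul]

theorem momentCone_eq_hull_range [FiniteDimensional ℝ E] {f : X → E}
    (hf : StronglyMeasurable f) : momentCone f = PointedCone.hull ℝ (range f) := by
  refine (hull_range_subset_momentCone hf).antisymm' ?_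
  rintro _ ⟨μ, hμ, rfl⟩
  simpa using integral_mem_hull_image_of_ae_mem hμ (S := univ) (by simp)

end MomentCone

/-- The moment cone `S_A` is a convex cone in `ℝ^m`, and it equals the convex
conic hull of the image of the moment curve: `S_A = conv cone s_A(X)`. -/
theorem moment_cone_convex_cone_eq_conic_hull {X : Type*} [MeasurableSpace X]
    {m : ℕ} (a : Fin m → X → ℝ) (ha : ∀ i, Measurable (a i)) :
    let S : Set (Fin m → ℝ) := {s | ∃ μ : Measure X,
      (∀ i, Integrable (a i) μ) ∧ ∀ i, s i = ∫ x, a i x ∂μ}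
    Convex ℝ S ∧ (∀ (c : ℝ), 0 ≤ c → ∀ s ∈ S, c • s ∈ S) ∧
      S = {s | ∃ (k : ℕ) (x : Fin k → X) (c : Fin k → ℝ),
        (∀ j, 0 ≤ c j) ∧ ∀ i, s i = ∑ j, c j * a i (x j)} := by
  intro S
  set C : PointedCone ℝ (Fin m → ℝ) := PointedCone.hull ℝ (range fun x i => a i x)
  have hS : S = C := by
    rw [← momentCone_eq_hull_range (measurable_pi_iff.2 ha).stronglyMeasurable]
    ext s
    refine exists_congr fun μ => ?_
    rw [integrable_pi_iff, funext_iff]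
    exact and_congr_right fun hμ => forall_congr' fun i => by rw [eval_integral hμ, eq_comm]
  have hC : (C : Set (Fin m → ℝ)) = {s | ∃ (k : ℕ) (x : Fin k → X) (c : Fin k → ℝ),
      (∀ j, 0 ≤ c j) ∧ ∀ i, s i = ∑ j, c j * a i (x j)} := by
    ext s
    rw [SetLike.mem_coe, PointedCone.mem_hull_range_iff]
    simp [funext_iff, Finset.sum_apply]
  refine ⟨hS ▸ C.convex, fun c hc s hs => ?_, hS.trans hC⟩
  rw [hS] at hs ⊢
  exact C.smul_mem hc hs
end

section
/- If the image s_A(X) of the moment curve is countable and A = {a_1,...,a_m} is linearly independent, then the Carathéodory number of the moment cone equals m; i.e., there exists a moment sequence that has no representing measure with fewer than m atoms. -/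
/-!
Since `A` is linearly independent, the curve points `s_A(x)` span `ℝ^m`, so they contain a
basis `s_A(x_1), …, s_A(x_m)`; every vector with positive coordinates in this basis is the moment
vector of an `m`-atomic measure, and these vectors form a nonempty open cone. A vector with a
`k`-atomic representation, `k < m`, lies in the span of `k` curve points. When the curve is
countable there are only countably many such spans, each a proper closed subspace, so by Baire
the open cone contains a vector outside all of them.
-/

open MeasureTheory

theorem LinearIndependent.span_range_swap_eq_top {K ι X : Type*} [Field K] [Fintype ι]
    {a : ι → X → K} (ha : LinearIndependent K a) :
    Submodule.span K (Set.range (Function.swap a)) = ⊤ := by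
  classical
  by_contra h
  obtain ⟨f, hf0, hf⟩ :=
    Submodule.exists_dual_map_eq_bot_of_lt_top (lt_top_iff_ne_top.2 h) inferInstance
  have hfa : ∀ x, ∑ i, f (Pi.single i 1) * a i x = 0 := fun x => by
    have hx := Submodule.mem_map_of_mem (f := f)
      (Submodule.subset_span (R := K) (Set.mem_range_self (f := Function.swap a) x))
    rw [hf, Submodule.mem_bot, pi_eq_sum_univ' (Function.swap a x)] at hx
    simpa [mul_comm] using hx
  have hc := Fintype.linearIndependent_iff.1 ha _ (funext fun x => by simpa using hfa x)
  exact hf0 ((Pi.basisFun K ι).ext fun i => by simpa using hc i)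

theorem Submodule.span_range_ne_top_of_card_lt {K E : Type*} [DivisionRing K] [AddCommGroup E]
    [Module K E] [FiniteDimensional K E] {k : ℕ} (v : Fin k → E) (hk : k < Module.finrank K E) :
    Submodule.span K (Set.range v) ≠ ⊤ := fun h => by
  have := finrank_range_le_card (R := K) v
  rw [Set.finrank, h, finrank_top, Fintype.card_fin] at this
  omega

theorem exists_mem_open_forall_notMem_submodule {𝕜 E ι : Type*} [NontriviallyNormedField 𝕜]
    [CompleteSpace 𝕜] [NormedAddCommGroup E] [NormedSpace 𝕜 E] [FiniteDimensional 𝕜 E]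
    [Countable ι] {p : ι → Submodule 𝕜 E} (hp : ∀ i, p i ≠ ⊤) {U : Set E} (hU : IsOpen U)
    (hne : U.Nonempty) : ∃ x ∈ U, ∀ i, x ∉ p i := by
  have := FiniteDimensional.complete 𝕜 E
  have hdense : Dense (⋂ i, ((p i : Set E))ᶜ) :=
    dense_iInter_of_isOpen (fun i => (p i).closed_of_finiteDimensional.isOpen_compl) fun i =>
      interior_eq_empty_iff_dense_compl.1 <| Set.not_nonempty_iff_eq_empty.1 fun h =>
        hp i ((p i).eq_top_of_nonempty_interior' h)
  obtain ⟨x, hx, hxU⟩ := hdense.exists_mem_open hU hne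
  exact ⟨x, hxU, Set.mem_iInter.1 hx⟩

namespace Module.Basis

variable {ι E : Type*} [Finite ι]

theorem isOpen_setOf_forall_repr_pos [NormedAddCommGroup E] [NormedSpace ℝ E]
    [FiniteDimensional ℝ E] (B : Basis ι ℝ E) : IsOpen {y | ∀ j, 0 < B.repr y j} := by
  simp only [Set.ofPred_forall]
  exact isOpen_iInter_of_finite fun j =>
    isOpen_lt continuous_const (B.coord j).continuous_of_finiteDimensional

theorem nonempty_setOf_forall_repr_pos [AddCommGroup E] [Module ℝ E] (B : Basis ι ℝ E) :
    {y | ∀ j, 0 < B.repr y j}.Nonempty :=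
  ⟨B.equivFun.symm 1, fun j => by simp [← B.equivFun_apply]⟩

end Module.Basis

section Dirac

variable {X ι : Type*} [MeasurableSpace X] {f : X → ℝ}

theorem integrable_finset_sum_smul_dirac (hf : Measurable f) (s : Finset ι) (c : ι → ℝ)
    (x : ι → X) : Integrable f (∑ j ∈ s, ENNReal.ofReal (c j) • Measure.dirac (x j)) :=
  integrable_finsetSum_measure.2 fun _ _ =>
    (integrable_dirac' hf.stronglyMeasurable enorm_lt_top).smul_measure ENNReal.ofReal_ne_top

theorem integral_finset_sum_smul_dirac (hf : Measurable f) {s : Finset ι} {c : ι → ℝ}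
    (hc : ∀ j ∈ s, 0 ≤ c j) (x : ι → X) :
    ∫ y, f y ∂(∑ j ∈ s, ENNReal.ofReal (c j) • Measure.dirac (x j)) = ∑ j ∈ s, c j * f (x j) := by
  rw [integral_finsetSum_measure fun _ _ =>
    (integrable_dirac' hf.stronglyMeasurable enorm_lt_top).smul_measure ENNReal.ofReal_ne_top]
  refine Finset.sum_congr rfl fun j hj => ?_
  rw [integral_smul_measure, integral_dirac' _ _ hf.stronglyMeasurable,
    ENNReal.toReal_ofReal (hc j hj), smul_eq_mul]

end Dirac

/-- If the image of the moment curve is countable and `A = {a 1, …, a m}` is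
linearly independent, then the Carathéodory number of the moment cone equals
`m`: there exists a moment sequence admitting no representing measure with
fewer than `m` atoms. -/
theorem caratheodory_number_eq_of_countable_range {X : Type*} [MeasurableSpace X]
    {m : ℕ} (a : Fin m → X → ℝ) (ha : ∀ i, Measurable (a i))
    (hindep : LinearIndependent ℝ a)
    (hcount : (Set.range (fun x : X => fun i => a i x)).Countable) :
    ∃ s : Fin m → ℝ,
      (∃ μ : Measure X, (∀ i, Integrable (a i) μ) ∧ ∀ i, s i = ∫ x, a i x ∂μ) ∧
      ∀ k : ℕ, k < m →
        ¬∃ (c : Fin k → ℝ) (xs : Fin k → X), (∀ j, 0 < c j) ∧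
          ∀ i, s i = ∑ j, c j * a i (xs j) := by
  set S := Set.range (Function.swap a)
  have hS : ⊤ ≤ Submodule.span ℝ S := hindep.span_range_swap_eq_top.ge
  let B := Module.Basis.ofSpan hS
  have := FiniteDimensional.fintypeBasisIndex B
  choose xb hxb using fun j => Module.Basis.ofSpan_subset hS ⟨j, rfl⟩
  have : Countable S := hcount.to_subtype
  obtain ⟨s, hs_pos, hs_avoid⟩ := exists_mem_open_forall_notMem_submodule
    (p := fun t : Σ k : Fin m, Fin k → S => Submodule.span ℝ (Set.range fun j => (t.2 j).1))
    (fun t => Submodule.span_range_ne_top_of_card_lt _ (by simp))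
    B.isOpen_setOf_forall_repr_pos B.nonempty_setOf_forall_repr_pos
  refine ⟨s, ⟨∑ j, ENNReal.ofReal (B.repr s j) • Measure.dirac (xb j),
    fun i => integrable_finset_sum_smul_dirac (ha i) _ _ _, fun i => ?_⟩, ?_⟩
  · rw [integral_finset_sum_smul_dirac (ha i) (fun j _ => (hs_pos j).le)]
    conv_lhs => rw [← B.sum_repr s]
    simp only [Finset.sum_apply, Pi.smul_apply, smul_eq_mul]
    exact Finset.sum_congr rfl fun j _ => congrArg _ (congrFun (hxb j) i).symm
  · rintro k hk ⟨c, xs, -, hcs⟩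
    apply hs_avoid ⟨⟨k, hk⟩, fun j => ⟨_, xs j, rfl⟩⟩
    have hs : s = ∑ j, c j • Function.swap a (xs j) := funext fun i => by simp [hcs i]
    rw [hs]
    exact Submodule.sum_mem _ fun j _ => Submodule.smul_mem _ _ (Submodule.subset_span ⟨j, rfl⟩)
end

section
/- For the moment problem with monomials of degree at most 2 in n variables on the cube [0,1]^n, consider the points P = {0, e_1,...,e_n, e_i + e_j (1 ≤ i < j ≤ n)} ⊆ {0,1}^n. The vectors s_A(x) for x ∈ P, where s_A(x) = (x^α)_{|α| ≤ 2}, are linearly independent; hence the rank of the matrix (s_A(x))_{x ∈ Z(𝔮)} over the zero set Z(𝔮) = {0,1}^n equals C(n+2,2) − n. -/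
/-!
On a vertex `𝟙_s` of the cube, `x^α` is `1` if `supp α ⊆ s` and `0` otherwise, so it only
depends on `supp α`, a set of at most `d` coordinates when `|α| ≤ d`. Hence every moment vector
`s_A(𝟙_s)` is pulled back along `α ↦ supp α` from a function on `{S : |S| ≤ d}`, and their span
has dimension at most `#{S : |S| ≤ d}`. Conversely, read at the exponents `α = 𝟙_S`, the vectors
`s_A(𝟙_s)` with `|s| ≤ d` form the zeta matrix `[S ⊆ s]` of the inclusion order, which is
unitriangular. For `d = 2` these `s` are exactly the supports of the points `0, eᵢ, eᵢ + eⱼ`,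
and there are `1 + n + C(n, 2) = C(n + 2, 2) - n` of them.
-/

open Finset Function

theorem Finsupp.card_support_le_degree {ι : Type*} (α : ι →₀ ℕ) : #α.support ≤ α.degree := by
  rw [degree_apply]
  simpa using card_nsmul_le_sum α.support α 1 fun i hi =>
    Nat.one_le_iff_ne_zero.2 (mem_support_iff.1 hi)

theorem Multiset.degree_toFinsupp {ι : Type*} [DecidableEq ι] (s : Multiset ι) :
    s.toFinsupp.degree = card s :=
  toFinsupp_sum_eq s

theorem Fintype.card_finset_card_le {ι : Type*} [Fintype ι] (d : ℕ) :
    Fintype.card {s : Finset ι // #s ≤ d} =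
      ∑ k ∈ range (d + 1), (Fintype.card ι).choose k := by
  classical
  rw [Fintype.card_subtype, card_eq_sum_card_fiberwise (f := Finset.card) (t := range (d + 1))
    (fun s hs => by simpa [Nat.lt_succ_iff] using hs)]
  refine Finset.sum_congr rfl fun k hk => ?_
  rw [← Fintype.card_finset_len, Fintype.card_subtype, filter_filter]
  congr 1
  ext s
  simp only [mem_range, Nat.lt_succ_iff] at hk
  simp only [mem_filter, mem_univ, true_and]
  omega

theorem linearIndependent_ite_le {R P : Type*} [Ring R] [PartialOrder P] [Fintype P]
    [DecidableLE P] :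
    LinearIndependent R fun t : P => fun s : P => if s ≤ t then (1 : R) else 0 := by
  rw [Fintype.linearIndependent_iff]
  intro g hg t
  -- downward induction: read at `s = t`, the relation keeps only `g t` and coefficients `g t'`
  -- with `t < t'`, which vanish already
  induction t using WellFoundedGT.induction with
  | _ t ih =>
    have h := congrFun hg t
    simp only [Finset.sum_apply, Pi.smul_apply, smul_eq_mul, mul_ite, mul_one, mul_zero,
      Pi.zero_apply] at h
    rwa [Finset.sum_eq_single t (fun t' _ ht' => ?_) (by simp), if_pos le_rfl] at h
    split_ifs with hle
    · exact ih t' (lt_of_le_of_ne hle (Ne.symm ht'))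
    · rfl

section Cube

variable {ι K : Type*} [DecidableEq ι]

def cubeVertex [Zero K] [One K] (s : Finset ι) : ι → K := fun i => if i ∈ s then 1 else 0

variable [Fintype ι]

theorem prod_cubeVertex_pow [CommMonoidWithZero K] (s : Finset ι) (α : ι →₀ ℕ) :
    ∏ i, cubeVertex s i ^ α i = if α.support ⊆ s then (1 : K) else 0 := by
  split_ifs with h
  · refine prod_eq_one fun i _ => ?_
    by_cases hi : i ∈ s
    · simp [cubeVertex, hi]
    · simp [Finsupp.notMem_support_iff.1 (mt (@h i) hi)]
  · obtain ⟨i, hα, hs⟩ := not_subset.1 h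
    exact prod_eq_zero (mem_univ i) (by simp [cubeVertex, hs, Finsupp.mem_support_iff.1 hα])

theorem setOf_forall_eq_zero_or_eq_one [Zero K] [One K] :
    {x : ι → K | ∀ i, x i = 0 ∨ x i = 1} = Set.range cubeVertex := by
  classical
  ext x
  constructor
  · intro hx
    refine ⟨({i | x i = 1} : Finset ι), funext fun i => ?_⟩
    rcases hx i with h | h <;> simp [cubeVertex, h, eq_comm]
  · rintro ⟨s, rfl⟩ i
    by_cases hi : i ∈ s <;> simp [cubeVertex, hi]

variable (ι) in
abbrev BoundedExponent (d : ℕ) := {α : ι →₀ ℕ // ∑ i, α i ≤ d}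

variable (ι) in
abbrev BoundedFinset (d : ℕ) := {s : Finset ι // #s ≤ d}

variable {d : ℕ}

def BoundedExponent.support (α : BoundedExponent ι d) : BoundedFinset ι d :=
  ⟨α.1.support, (α.1.card_support_le_degree.trans_eq (Finsupp.degree_eq_sum _)).trans α.2⟩

noncomputable def BoundedFinset.toExponent (s : BoundedFinset ι d) : BoundedExponent ι d :=
  ⟨Multiset.toFinsupp s.1.val, by
    rw [← Finsupp.degree_eq_sum, Multiset.degree_toFinsupp]
    exact s.2⟩

theorem BoundedFinset.support_toExponent (s : BoundedFinset ι d) : s.toExponent.support = s :=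
  Subtype.ext (val_toFinset s.1)

section CommRing

variable [CommRing K]

variable (d) in
def monomialVector (x : ι → K) : BoundedExponent ι d → K := fun α => ∏ i, x i ^ α.1 i

theorem monomialVector_cubeVertex (s : Finset ι) :
    monomialVector d (cubeVertex s : ι → K) =
      LinearMap.funLeft K K BoundedExponent.support fun t => if t.1 ⊆ s then 1 else 0 :=
  funext fun α => prod_cubeVertex_pow s α.1

theorem span_monomialVector_cube_le :
    Submodule.span K (monomialVector d '' {x : ι → K | ∀ i, x i = 0 ∨ x i = 1}) ≤
      LinearMap.range (LinearMap.funLeft K K (BoundedExponent.support (ι := ι) (d := d))) := by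
  rw [Submodule.span_le, setOf_forall_eq_zero_or_eq_one, ← Set.range_comp]
  rintro _ ⟨s, rfl⟩
  exact ⟨_, (monomialVector_cubeVertex s).symm⟩

theorem linearIndependent_monomialVector_cubeVertex :
    LinearIndependent K fun s : BoundedFinset ι d =>
      monomialVector d (cubeVertex s.1 : ι → K) := by
  refine LinearIndependent.of_comp (LinearMap.funLeft K K BoundedFinset.toExponent) ?_
  have h : LinearMap.funLeft K K BoundedFinset.toExponent ∘
      (fun s : BoundedFinset ι d => monomialVector d (cubeVertex s.1 : ι → K)) =
      fun s t => if t ≤ s then 1 else 0 := by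
    funext s t
    simp [monomialVector_cubeVertex, LinearMap.funLeft_apply, BoundedFinset.support_toExponent]
  rw [h]
  exact linearIndependent_ite_le

end CommRing

variable (d) in
theorem finrank_span_monomialVector_cube [Field K] :
    Module.finrank K
        (Submodule.span K (monomialVector d '' {x : ι → K | ∀ i, x i = 0 ∨ x i = 1})) =
      Fintype.card (BoundedFinset ι d) := by
  have hle := span_monomialVector_cube_le (K := K) (ι := ι) (d := d)
  have := Submodule.finiteDimensional_of_le hle
  apply le_antisymm
  · calc _ ≤ Module.finrank K (LinearMap.range _) := Submodule.finrank_mono hle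
      _ ≤ _ := (LinearMap.finrank_range_le _).trans_eq (Module.finrank_fintype_fun_eq_card K)
  · rw [← finrank_span_eq_card (linearIndependent_monomialVector_cubeVertex (K := K) (d := d))]
    refine Submodule.finrank_mono (Submodule.span_mono ?_)
    rintro _ ⟨s, rfl⟩
    exact Set.mem_image_of_mem _ (setOf_forall_eq_zero_or_eq_one.superset ⟨s.1, rfl⟩)

end Cube

section Pairs

variable {ι : Type*} [LinearOrder ι]

theorem Finset.pair_injective_of_lt :
    Injective fun q : {q : ι × ι // q.1 < q.2} => ({q.1.1, q.1.2} : Finset ι) := by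
  rintro ⟨⟨a, b⟩, hab : a < b⟩ ⟨⟨c, d⟩, hcd : c < d⟩ h
  have h' := congrArg ((↑) : Finset ι → Set ι) h
  push_cast at h'
  rcases Set.pair_eq_pair_iff.1 h' with ⟨rfl, rfl⟩ | ⟨rfl, rfl⟩
  · rfl
  · exact absurd (hab.trans hcd) (lt_irrefl _)

def vertexFinset : Unit ⊕ ι ⊕ {q : ι × ι // q.1 < q.2} → Finset ι :=
  Sum.elim (fun _ => ∅) (Sum.elim singleton fun q => {q.1.1, q.1.2})

theorem vertexFinset_injective : Injective (vertexFinset (ι := ι)) := by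
  refine injective_of_subsingleton _ |>.sumElim
    (singleton_injective.sumElim pair_injective_of_lt fun i q h => ?_) ?_
  · have := congrArg card h
    rw [card_singleton, card_pair (ne_of_lt q.2)] at this
    omega
  · rintro _ (i | q) h
    exacts [singleton_ne_empty i h.symm, insert_ne_empty _ _ h.symm]

theorem card_vertexFinset_le (t : Unit ⊕ ι ⊕ {q : ι × ι // q.1 < q.2}) :
    #(vertexFinset t) ≤ 2 := by
  rcases t with _ | i | q <;> simp [vertexFinset, card_le_two]

end Pairs

/-- For monomials of degree at most `2` in `n` variables: the moment curve
vectors `s_A(x) = (x^α)_{|α| ≤ 2}` at the points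
`P = {0, e₁, …, eₙ, e_i + e_j (i < j)} ⊆ {0,1}^n` are linearly independent;
hence the rank of the family `(s_A(x))_{x ∈ {0,1}^n}` equals
`C(n+2, 2) - n`. -/
theorem rank_quadratic_monomials_on_cube_vertices (n : ℕ) :
    let σ := {α : Fin n →₀ ℕ // (∑ i, α i) ≤ 2}
    let sA : (Fin n → ℝ) → (σ → ℝ) := fun x α => ∏ i, x i ^ (α.1 i)
    let pt : Unit ⊕ Fin n ⊕ {q : Fin n × Fin n // q.1 < q.2} → (Fin n → ℝ) :=
      fun t => match t with
        | Sum.inl _ => fun _ => 0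
        | Sum.inr (Sum.inl i) => fun l => if l = i then 1 else 0
        | Sum.inr (Sum.inr q) => fun l => if l = q.1.1 ∨ l = q.1.2 then 1 else 0
    LinearIndependent ℝ (fun t => sA (pt t)) ∧
      Module.finrank ℝ (Submodule.span ℝ
          (sA '' {x : Fin n → ℝ | ∀ i, x i = 0 ∨ x i = 1})) =
        Nat.choose (n + 2) 2 - n := by
  intro σ sA pt
  have hsA : sA = monomialVector 2 := rfl
  have hpt : pt = fun t => cubeVertex (vertexFinset t) := by
    funext t l
    rcases t with _ | i | q <;> simp [pt, cubeVertex, vertexFinset]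
  rw [hsA, hpt]
  refine ⟨?_, ?_⟩
  · exact linearIndependent_monomialVector_cubeVertex.comp
      (fun t => ⟨vertexFinset t, card_vertexFinset_le t⟩)
      fun t t' h => vertexFinset_injective (congrArg Subtype.val h)
  · rw [finrank_span_monomialVector_cube, Fintype.card_finset_card_le, Fintype.card_fin]
    simp only [Nat.reduceAdd, sum_range_succ, range_one, sum_singleton, Nat.choose_zero_right,
      Nat.choose_one_right, Nat.choose_succ_succ, Nat.succ_eq_add_one, zero_add]
    omega
end

section
/- The Pythagoras number of A² is bounded below: P_{A²} ≥ ⌈ dim(lin A²) / |A| ⌉; in particular for A = {1, x, x³, x⁷} on ℝ, one has dim lin A² = 10 and P_{A²} ≥ 3, i.e., there is a sum of squares of elements of lin A that cannot be written as a sum of fewer than 3 squares. -/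
open Set Module
open scoped ENNReal

lemma py_core (X : Type) (m k : ℕ) (a : Fin m → X → ℝ)
    (hk : ∀ f : X → ℝ,
      (∃ (k' : ℕ) (g : Fin k' → Fin m → ℝ), ∀ x, f x = ∑ j, (∑ i, g j i * a i x) ^ 2) →
      ∃ g : Fin k → Fin m → ℝ, ∀ x, f x = ∑ j, (∑ i, g j i * a i x) ^ 2) :
    finrank ℝ (Submodule.span ℝ (Set.range
      fun p : Fin m × Fin m => (fun x => a p.1 x * a p.2 x))) ≤ k * m := by
  classical
  set v : Fin m × Fin m → (X → ℝ) := fun p x => a p.1 x * a p.2 x with hv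
  set V : Submodule ℝ (X → ℝ) := Submodule.span ℝ (Set.range v) with hV
  haveI : FiniteDimensional ℝ V := FiniteDimensional.span_of_finite ℝ (Set.finite_range v)
  set d : ℕ := finrank ℝ V with hd
  -- squares
  set sqf : (Fin m → ℝ) → (X → ℝ) := fun c x => (∑ i, c i * a i x) ^ 2 with hsqf
  have key : ∀ c, sqf c = ∑ p : Fin m × Fin m, (c p.1 * c p.2) • v p := by
    intro c
    funext x
    simp only [hsqf, Finset.sum_apply, Pi.smul_apply, smul_eq_mul, hv]
    rw [sq, Finset.sum_mul_sum, Fintype.sum_prod_type]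
    congr 1; funext i; congr 1; funext j; ring
  have sqmem : ∀ c, sqf c ∈ V := by
    intro c
    rw [key]
    exact Submodule.sum_mem _ fun p _ =>
      Submodule.smul_mem _ _ (Submodule.subset_span (mem_range_self p))
  set vv : Fin m × Fin m → V := fun p => ⟨v p, Submodule.subset_span (mem_range_self p)⟩ with hvv
  set vsq : (Fin m → ℝ) → V := fun c => ⟨sqf c, sqmem c⟩ with hvsq
  -- the set of sums of squares inside V
  set S : Set V := {u | ∃ (k' : ℕ) (g : Fin k' → Fin m → ℝ),
      ∀ x, (u : X → ℝ) x = ∑ j, (∑ i, g j i * a i x) ^ 2} with hS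
  have hvsqS : ∀ c, vsq c ∈ S := by
    intro c
    refine ⟨1, fun _ => c, fun x => ?_⟩
    simp [hvsq, hsqf]
  have hS0 : (0 : V) ∈ S := ⟨0, fun j => 0, fun x => by simp⟩
  have hadd : ∀ u₁ ∈ S, ∀ u₂ ∈ S, u₁ + u₂ ∈ S := by
    rintro u₁ ⟨k₁, g₁, h₁⟩ u₂ ⟨k₂, g₂, h₂⟩
    refine ⟨k₁ + k₂, Fin.append g₁ g₂, fun x => ?_⟩
    rw [Fin.sum_univ_add]
    simp only [Fin.append_left, Fin.append_right]
    have : ((u₁ + u₂ : V) : X → ℝ) x = (u₁ : X → ℝ) x + (u₂ : X → ℝ) x := rfl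
    rw [this, h₁ x, h₂ x]
  have hsmul : ∀ (t : ℝ), 0 ≤ t → ∀ u ∈ S, t • u ∈ S := by
    rintro t ht u ⟨k', g, h⟩
    refine ⟨k', fun j i => Real.sqrt t * g j i, fun x => ?_⟩
    have : ((t • u : V) : X → ℝ) x = t * (u : X → ℝ) x := rfl
    rw [this, h x, Finset.mul_sum]
    congr 1; funext j
    have : ∑ i, Real.sqrt t * g j i * a i x = Real.sqrt t * ∑ i, g j i * a i x := by
      rw [Finset.mul_sum]; congr 1; funext i; ring
    rw [this, mul_pow, Real.sq_sqrt ht]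
  have hconv : Convex ℝ S := by
    intro u₁ h₁ u₂ h₂ s t hs ht hst
    exact hadd _ (hsmul s hs u₁ h₁) _ (hsmul t ht u₂ h₂)
  -- span of S is everything
  have hspanvv : Submodule.span ℝ (Set.range vv) = ⊤ := by
    apply Submodule.map_injective_of_injective V.injective_subtype
    rw [Submodule.map_span, Submodule.map_top, Submodule.range_subtype]
    have : V.subtype '' (Set.range vv) = Set.range v := by
      rw [← Set.range_comp]
      rfl
    rw [this, hV]
  have hsingle : ∀ (i0 : Fin m) (x : X), ∑ i, (Pi.single i0 1 : Fin m → ℝ) i * a i x = a i0 x := by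
    intro i0 x
    rw [Finset.sum_eq_single i0]
    · simp
    · intro b _ hb; simp [Pi.single_apply, hb]
    · intro h; exact absurd (Finset.mem_univ i0) h
  have hspanS : Submodule.span ℝ S = ⊤ := by
    rw [eq_top_iff, ← hspanvv, Submodule.span_le]
    rintro _ ⟨p, rfl⟩
    set c₁ : Fin m → ℝ := Pi.single p.1 1 with hc₁
    set c₂ : Fin m → ℝ := Pi.single p.2 1 with hc₂
    have heq : vv p = (2⁻¹ : ℝ) • (vsq (c₁ + c₂) - vsq c₁ - vsq c₂) := by
      apply Subtype.ext
      funext x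
      have e1 : ∑ i, (c₁ + c₂) i * a i x
          = (∑ i, c₁ i * a i x) + ∑ i, c₂ i * a i x := by
        rw [← Finset.sum_add_distrib]
        refine Finset.sum_congr rfl fun i _ => ?_
        rw [Pi.add_apply]; ring
      show a p.1 x * a p.2 x
          = 2⁻¹ * ((∑ i, (c₁ + c₂) i * a i x) ^ 2
          - (∑ i, c₁ i * a i x) ^ 2 - (∑ i, c₂ i * a i x) ^ 2)
      rw [e1, hc₁, hc₂, hsingle, hsingle]
      ring
    rw [heq]
    exact Submodule.smul_mem _ _ (Submodule.sub_mem _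
      (Submodule.sub_mem _ (Submodule.subset_span (hvsqS _)) (Submodule.subset_span (hvsqS _)))
      (Submodule.subset_span (hvsqS _)))
  -- move to coordinates
  set e : V ≃ₗ[ℝ] (Fin d → ℝ) := (Module.finBasis ℝ V).equivFun with he
  set T : Set (Fin d → ℝ) := (e : V →ₗ[ℝ] (Fin d → ℝ)) '' S with hT
  have hconvT : Convex ℝ T := hconv.linear_image _
  have hspanT : Submodule.span ℝ T = ⊤ := by
    rw [hT, Submodule.span_image, hspanS, Submodule.map_top, LinearMap.range_eq_top]
    exact e.surjective
  have h0T : (0 : Fin d → ℝ) ∈ T := ⟨0, hS0, map_zero _⟩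
  have haff : affineSpan ℝ T = ⊤ := by
    have hcoe : (affineSpan ℝ T : Set (Fin d → ℝ)) = univ := by
      rw [← Set.insert_eq_of_mem h0T, affineSpan_insert_zero, hspanT]
      rfl
    rw [eq_top_iff]
    intro x _
    have : x ∈ (affineSpan ℝ T : Set (Fin d → ℝ)) := hcoe ▸ mem_univ x
    exact this
  obtain ⟨u0, hu0⟩ := (hconvT.interior_nonempty_iff_affineSpan_eq_top).2 haff
  -- the square map in coordinates
  set Ψ : (Fin k → Fin m → ℝ) → (Fin d → ℝ) := fun g => ∑ j, e (vsq (g j)) with hΨ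
  have hkeyV : ∀ c, vsq c = ∑ p : Fin m × Fin m, (c p.1 * c p.2) • vv p := by
    intro c
    apply Subtype.ext
    show sqf c = ((∑ p : Fin m × Fin m, (c p.1 * c p.2) • vv p : V) : X → ℝ)
    rw [key c, AddSubmonoidClass.coe_finset_sum]
    rfl
  have hΨeq : Ψ = fun g => ∑ j, ∑ p : Fin m × Fin m, (g j p.1 * g j p.2) • e (vv p) := by
    funext g
    show (∑ j, e (vsq (g j))) = ∑ j, ∑ p : Fin m × Fin m, (g j p.1 * g j p.2) • e (vv p)
    refine Finset.sum_congr rfl fun j _ => ?_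
    rw [hkeyV, map_sum]
    refine Finset.sum_congr rfl fun p _ => ?_
    rw [map_smul]
  have hsmooth : ContDiff ℝ 1 Ψ := by
    rw [hΨeq]
    apply ContDiff.sum
    intro j _
    apply ContDiff.sum
    intro p _
    have hproj : ∀ (i : Fin m), ContDiff ℝ 1 (fun g : Fin k → Fin m → ℝ => g j i) := by
      intro i
      exact ((ContinuousLinearMap.proj (R := ℝ) (φ := fun _ : Fin m => ℝ) i).comp
        (ContinuousLinearMap.proj (R := ℝ) (φ := fun _ : Fin k => Fin m → ℝ) j)).contDiff
    exact (ContDiff.mul (hproj p.1) (hproj p.2)).smul contDiff_const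
  have hsub : T ⊆ range Ψ := by
    rintro _ ⟨u, hu, rfl⟩
    obtain ⟨g, hg⟩ := hk (u : X → ℝ) hu
    have hu' : u = ∑ j, vsq (g j) := by
      apply Subtype.ext
      rw [AddSubmonoidClass.coe_finset_sum]
      funext x
      rw [hg x, Finset.sum_apply]
    refine ⟨g, ?_⟩
    show (∑ j, e (vsq (g j))) = (↑e : V →ₗ[ℝ] Fin d → ℝ) u
    rw [hu', map_sum]
    rfl
  -- Hausdorff dimension
  have h1 : dimH (range Ψ) = (finrank ℝ (Fin d → ℝ) : ℝ≥0∞) :=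
    Real.dimH_of_mem_nhds (Filter.mem_of_superset
      (isOpen_interior.mem_nhds hu0) (interior_subset.trans hsub))
  have h2 : dimH (range Ψ) ≤ (finrank ℝ (Fin k → Fin m → ℝ) : ℝ≥0∞) :=
    hsmooth.dimH_range_le
  rw [h1] at h2
  have hd1 : finrank ℝ (Fin d → ℝ) = d := by simp
  have hd2 : finrank ℝ (Fin k → Fin m → ℝ) = k * m := by
    simp [Module.finrank_pi_fintype, Module.finrank_pi, Finset.sum_const, mul_comm]
  rw [hd1, hd2] at h2
  exact_mod_cast h2


lemma monomial_li : LinearIndependent ℝ (fun n : ℕ => fun x : ℝ => x ^ n) := by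
  let L : Polynomial ℝ →ₗ[ℝ] (ℝ → ℝ) :=
    { toFun := fun p x => p.eval x
      map_add' := fun p q => by funext x; simp
      map_smul' := fun c p => by funext x; simp }
  have hinj : LinearMap.ker L = ⊥ := by
    rw [LinearMap.ker_eq_bot]
    intro p q h
    exact Polynomial.funext fun x => congrFun h x
  have h1 : LinearIndependent ℝ (fun n : ℕ => (Polynomial.X : Polynomial ℝ) ^ n) := by
    have hb := (Polynomial.basisMonomials ℝ).linearIndependent
    have : (fun n : ℕ => (Polynomial.X : Polynomial ℝ) ^ n)
        = ⇑(Polynomial.basisMonomials ℝ) := by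
      funext n
      rw [Polynomial.X_pow_eq_monomial, Polynomial.coe_basisMonomials]
    rw [this]
    exact hb
  have h2 := h1.map' L hinj
  have : (fun n : ℕ => fun x : ℝ => x ^ n) = L ∘ (fun n : ℕ => (Polynomial.X : Polynomial ℝ) ^ n) := by
    funext n x
    show x ^ n = Polynomial.eval x (Polynomial.X ^ n)
    simp
  rw [this]
  exact h2

def expon : Fin 10 → ℕ := ![0, 1, 2, 3, 4, 6, 7, 8, 10, 14]

lemma span_eq_span10 :
    Submodule.span ℝ (Set.range
      fun p : Fin 4 × Fin 4 => (fun x : ℝ =>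
        (![fun _ => 1, fun x => x, fun x => x ^ 3, fun x => x ^ 7] : Fin 4 → ℝ → ℝ) p.1 x *
        (![fun _ => 1, fun x => x, fun x => x ^ 3, fun x => x ^ 7] : Fin 4 → ℝ → ℝ) p.2 x))
    = Submodule.span ℝ (Set.range ((fun n : ℕ => fun x : ℝ => x ^ n) ∘ expon)) := by
  apply le_antisymm <;> rw [Submodule.span_le] <;> rintro _ ⟨p, rfl⟩ <;>
    apply Submodule.subset_span
  · fin_cases p
    · exact ⟨0, by funext x; show x ^ (0:ℕ) = 1 * 1; norm_num⟩
    · exact ⟨1, by funext x; show x ^ (1:ℕ) = 1 * x; norm_num⟩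
    · exact ⟨3, by funext x; show x ^ (3:ℕ) = 1 * x ^ 3; norm_num⟩
    · exact ⟨6, by funext x; show x ^ (7:ℕ) = 1 * x ^ 7; norm_num⟩
    · exact ⟨1, by funext x; show x ^ (1:ℕ) = x * 1; norm_num⟩
    · exact ⟨2, by funext x; show x ^ (2:ℕ) = x * x; norm_num; ring⟩
    · exact ⟨4, by funext x; show x ^ (4:ℕ) = x * x ^ 3; norm_num; ring⟩
    · exact ⟨7, by funext x; show x ^ (8:ℕ) = x * x ^ 7; norm_num; ring⟩
    · exact ⟨3, by funext x; show x ^ (3:ℕ) = x ^ 3 * 1; norm_num⟩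
    · exact ⟨4, by funext x; show x ^ (4:ℕ) = x ^ 3 * x; norm_num; ring⟩
    · exact ⟨5, by funext x; show x ^ (6:ℕ) = x ^ 3 * x ^ 3; norm_num; ring⟩
    · exact ⟨8, by funext x; show x ^ (10:ℕ) = x ^ 3 * x ^ 7; norm_num; ring⟩
    · exact ⟨6, by funext x; show x ^ (7:ℕ) = x ^ 7 * 1; norm_num⟩
    · exact ⟨7, by funext x; show x ^ (8:ℕ) = x ^ 7 * x; norm_num; ring⟩
    · exact ⟨8, by funext x; show x ^ (10:ℕ) = x ^ 7 * x ^ 3; norm_num; ring⟩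
    · exact ⟨9, by funext x; show x ^ (14:ℕ) = x ^ 7 * x ^ 7; norm_num; ring⟩
  · fin_cases p
    · exact ⟨(0, 0), by funext x; show (1 : ℝ) * 1 = x ^ (0:ℕ); norm_num⟩
    · exact ⟨(0, 1), by funext x; show (1 : ℝ) * x = x ^ (1:ℕ); norm_num⟩
    · exact ⟨(1, 1), by funext x; show x * x = x ^ (2:ℕ); norm_num; ring⟩
    · exact ⟨(0, 2), by funext x; show (1 : ℝ) * x ^ 3 = x ^ (3:ℕ); norm_num⟩
    · exact ⟨(1, 2), by funext x; show x * x ^ 3 = x ^ (4:ℕ); norm_num; ring⟩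
    · exact ⟨(2, 2), by funext x; show x ^ 3 * x ^ 3 = x ^ (6:ℕ); norm_num; ring⟩
    · exact ⟨(0, 3), by funext x; show (1 : ℝ) * x ^ 7 = x ^ (7:ℕ); norm_num⟩
    · exact ⟨(1, 3), by funext x; show x * x ^ 7 = x ^ (8:ℕ); norm_num; ring⟩
    · exact ⟨(2, 3), by funext x; show x ^ 3 * x ^ 7 = x ^ (10:ℕ); norm_num; ring⟩
    · exact ⟨(3, 3), by funext x; show x ^ 7 * x ^ 7 = x ^ (14:ℕ); norm_num; ring⟩

lemma finrank10 :
    Module.finrank ℝ (Submodule.span ℝ (Set.range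
      fun p : Fin 4 × Fin 4 => (fun x : ℝ =>
        (![fun _ => 1, fun x => x, fun x => x ^ 3, fun x => x ^ 7] : Fin 4 → ℝ → ℝ) p.1 x *
        (![fun _ => 1, fun x => x, fun x => x ^ 3, fun x => x ^ 7] : Fin 4 → ℝ → ℝ) p.2 x))) = 10 := by
  rw [span_eq_span10]
  have hli : LinearIndependent ℝ ((fun n : ℕ => fun x : ℝ => x ^ n) ∘ expon) :=
    monomial_li.comp expon (by decide)
  rw [finrank_span_eq_card hli, Fintype.card_fin]

lemma A_li : LinearIndependent ℝ (![fun _ => 1, fun x => x, fun x => x ^ 3, fun x => x ^ 7] : Fin 4 → ℝ → ℝ) := by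
  have h : (![fun _ => 1, fun x => x, fun x => x ^ 3, fun x => x ^ 7] : Fin 4 → ℝ → ℝ)
      = (fun n : ℕ => fun x : ℝ => x ^ n) ∘ (![0, 1, 3, 7] : Fin 4 → ℕ) := by
    funext i x
    fin_cases i <;> simp
  rw [h]
  exact monomial_li.comp _ (by decide)



/-- Lower bound for the Pythagoras number: if every sum of squares of elements
of `lin A` is a sum of at most `k` such squares, then
`k ≥ ⌈dim(lin A²) / |A|⌉`. In particular for `A = {1, x, x³, x⁷}` on `ℝ` one
has `dim lin A² = 10`, and there is a sum of squares of elements of `lin A`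
which cannot be written as a sum of fewer than `3` squares (so `P_{A²} ≥ 3`). -/
theorem pythagoras_lower_bound :
    (∀ (X : Type) (m : ℕ) (a : Fin m → X → ℝ), LinearIndependent ℝ a →
      ∀ k : ℕ,
        (∀ f : X → ℝ,
          (∃ (k' : ℕ) (g : Fin k' → Fin m → ℝ),
            ∀ x, f x = ∑ j, (∑ i, g j i * a i x) ^ 2) →
          ∃ g : Fin k → Fin m → ℝ, ∀ x, f x = ∑ j, (∑ i, g j i * a i x) ^ 2) →
        ⌈(Module.finrank ℝ (Submodule.span ℝ (Set.range
            fun p : Fin m × Fin m => (fun x => a p.1 x * a p.2 x))) : ℚ) /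
          (m : ℚ)⌉ ≤ (k : ℤ)) ∧
    (let a : Fin 4 → ℝ → ℝ :=
      ![fun _ => 1, fun x => x, fun x => x ^ 3, fun x => x ^ 7]
     Module.finrank ℝ (Submodule.span ℝ (Set.range
        fun p : Fin 4 × Fin 4 => (fun x : ℝ => a p.1 x * a p.2 x))) = 10 ∧
      ∃ f : ℝ → ℝ,
        (∃ (k' : ℕ) (g : Fin k' → Fin 4 → ℝ),
          ∀ x, f x = ∑ j, (∑ i, g j i * a i x) ^ 2) ∧
        ∀ k : ℕ, k < 3 →
          ¬∃ g : Fin k → Fin 4 → ℝ, ∀ x, f x = ∑ j, (∑ i, g j i * a i x) ^ 2) := by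
  constructor
  · intro X m a _ k hk
    have hb := py_core X m k a hk
    rcases Nat.eq_zero_or_pos m with hm | hm
    · subst hm
      simp only [Nat.mul_zero, Nat.le_zero] at hb
      rw [hb]
      norm_num
    · rw [Int.ceil_le]
      push_cast
      rw [div_le_iff₀ (by exact_mod_cast hm : (0:ℚ) < (m:ℚ))]
      exact_mod_cast py_core X m k a hk
  · refine ⟨finrank10, ?_⟩
    by_contra hc
    push_neg at hc
    set A : Fin 4 → ℝ → ℝ := ![fun _ => 1, fun x => x, fun x => x ^ 3, fun x => x ^ 7] with hA
    have hk2 : ∀ f : ℝ → ℝ,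
        (∃ (k' : ℕ) (g : Fin k' → Fin 4 → ℝ), ∀ x, f x = ∑ j, (∑ i, g j i * A i x) ^ 2) →
        ∃ g : Fin 2 → Fin 4 → ℝ, ∀ x, f x = ∑ j, (∑ i, g j i * A i x) ^ 2 := by
      intro f hf
      obtain ⟨k, hk3, g, hg⟩ := hc f hf
      interval_cases k
      · exact ⟨![0, 0], fun x => by
          rw [hg x]; simp [Fin.sum_univ_two]⟩
      · exact ⟨![g 0, 0], fun x => by
          rw [hg x]; simp [Fin.sum_univ_two, Fin.sum_univ_one]⟩
      · exact ⟨g, hg⟩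
    have hb := py_core ℝ 4 2 A hk2
    rw [finrank10] at hb
    omega
end

section
/- For A = {1, x², x³} on ℝ, the polynomial p(x) = x⁶ − x⁴ + 10 is nonnegative on ℝ and lies in lin A² = span{1, x², x³, x⁴, x⁵, x⁶}, but p is not a sum of squares of elements of lin A = span{1, x², x³}. -/
open Polynomial

lemma sq_coeff4 (a b c : ℝ) :
    (((C a + C b * X ^ 2 + C c * X ^ 3) ^ 2 : ℝ[X])).coeff 4 = b ^ 2 := by
  have h : ((C a + C b * X ^ 2 + C c * X ^ 3) ^ 2 : ℝ[X]) =
      C (a ^ 2) + C (2 * a * b) * X ^ 2 + C (2 * a * c) * X ^ 3 +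
        C (b ^ 2) * X ^ 4 + C (2 * b * c) * X ^ 5 + C (c ^ 2) * X ^ 6 := by
    simp only [map_pow, map_mul, map_ofNat]
    ring
  rw [h]
  simp only [coeff_add, coeff_C_mul, coeff_X_pow, coeff_C]
  norm_num

/-- For `A = {1, x², x³}` on `ℝ`, the polynomial `p(x) = x⁶ - x⁴ + 10` is
nonnegative on `ℝ` and lies in `lin A² = span{1, x², x³, x⁴, x⁵, x⁶}`, but `p`
is not a sum of squares of elements of `lin A = span{1, x², x³}`. -/
theorem not_sum_of_squares_example :
    (∀ x : ℝ, 0 ≤ x ^ 6 - x ^ 4 + 10) ∧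
    (fun x : ℝ => x ^ 6 - x ^ 4 + 10) ∈ Submodule.span ℝ
      ({fun _ => 1, fun x => x ^ 2, fun x => x ^ 3, fun x => x ^ 4,
        fun x => x ^ 5, fun x => x ^ 6} : Set (ℝ → ℝ)) ∧
    ¬∃ (k : ℕ) (g : Fin k → Fin 3 → ℝ), ∀ x : ℝ,
      x ^ 6 - x ^ 4 + 10 = ∑ j, (g j 0 + g j 1 * x ^ 2 + g j 2 * x ^ 3) ^ 2 := by
  refine ⟨?_, ?_, ?_⟩
  · intro x
    nlinarith [sq_nonneg (x ^ 3), sq_nonneg (x ^ 2), sq_nonneg (x ^ 3 - x),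
      sq_nonneg (x ^ 2 - 1), sq_nonneg x]
  · have h : (fun x : ℝ => x ^ 6 - x ^ 4 + 10) =
        (10 : ℝ) • (fun _ : ℝ => (1 : ℝ)) + (-1 : ℝ) • (fun x : ℝ => x ^ 4)
          + (1 : ℝ) • (fun x : ℝ => x ^ 6) := by
      funext x; simp; ring
    rw [h]
    refine Submodule.add_mem _ (Submodule.add_mem _ ?_ ?_) ?_ <;>
      exact Submodule.smul_mem _ _ (Submodule.subset_span (by simp))
  · rintro ⟨k, g, hg⟩
    set P : ℝ[X] := X ^ 6 - X ^ 4 + C 10 with hP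
    set Q : ℝ[X] := ∑ j : Fin k, (C (g j 0) + C (g j 1) * X ^ 2 + C (g j 2) * X ^ 3) ^ 2
      with hQ
    have hPQ : P = Q := by
      apply Polynomial.funext
      intro x
      simp only [hP, hQ, eval_finset_sum, eval_pow, eval_add, eval_mul, eval_C, eval_X,
        eval_sub]
      exact hg x
    have h4 : P.coeff 4 = -1 := by
      simp [hP, coeff_X_pow, coeff_C]
    have h4' : Q.coeff 4 = ∑ j : Fin k, (g j 1) ^ 2 := by
      rw [hQ, finset_sum_coeff]
      exact Finset.sum_congr rfl fun j _ => sq_coeff4 _ _ _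
    have hnn : (0 : ℝ) ≤ ∑ j : Fin k, (g j 1) ^ 2 :=
      Finset.sum_nonneg fun j _ => sq_nonneg _
    rw [hPQ, h4'] at h4
    linarith
end
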